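/- arXiv:2604.03051 — 6 statements merged into one kernel-verified Lean document; each statement's English description precedes it below -/
import Mathlib

section
/- Let k be a positive integer. Then sum over n, m from 0 to k of binom(n+m+k+1, k) * binom(3k-n-m+1, k) equals (k+1) * (binom(4k+3, 2k+2) - 2*binom(2k+1, k)^2). -/
open Finset

private lemma dv (a b N : ℕ) :
    ∑ j ∈ range (N+1), j.choose a * (N-j).choose b = (N+1).choose (a+b+1) := by
  induction N generalizing b with
  | zero => cases a <;> cases b <;> simp [Nat.choose]
  | succ N ih =>
    cases b with
    | zero =>
      rw [Finset.sum_range_succ]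
      have h1 : ∑ j ∈ range (N+1), j.choose a * (N+1-j).choose 0
          = ∑ j ∈ range (N+1), j.choose a * (N-j).choose 0 := by simp
      rw [h1, ih 0, Nat.sub_self, Nat.choose_zero_right, mul_one]
      simp only [Nat.add_zero]
      rw [Nat.choose_succ_succ (N+1) a]
      simp only [Nat.succ_eq_add_one]
      omega
    | succ b =>
      rw [Finset.sum_range_succ]
      have h1 : ∑ j ∈ range (N+1), j.choose a * (N+1-j).choose (b+1)
          = ∑ j ∈ range (N+1),
              (j.choose a * (N-j).choose b + j.choose a * (N-j).choose (b+1)) := by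
        refine Finset.sum_congr rfl fun j hj => ?_
        have hjN : j ≤ N := Nat.lt_succ_iff.mp (Finset.mem_range.mp hj)
        have h2 : N+1-j = (N-j)+1 := by omega
        rw [h2, Nat.choose_succ_succ, Nat.mul_add]
      rw [h1, Finset.sum_add_distrib, ih b, ih (b+1), Nat.sub_self]
      have h3 : a + (b+1) + 1 = (a+b+1)+1 := by omega
      rw [h3, Nat.choose_succ_succ (N+1) (a+b+1)]
      simp only [Nat.succ_eq_add_one]
      simp

private def ff (k j : ℕ) : ℤ := (j.choose k : ℤ) * ((4*k+2-j).choose k : ℤ)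

private def gg (k j : ℕ) : ℤ := (j.choose (k+1) : ℤ) * ((4*k+2-j).choose k : ℤ)

private def RR (k x : ℕ) : ℤ := ∑ j ∈ range x, ff k j

private def YY (k : ℕ) : ℤ := ∑ j ∈ range (2*k+1), gg k j

private lemma Rsplit (k x y : ℕ) :
    RR k (x+y) = RR k x + ∑ i ∈ range y, ff k (x+i) :=
  Finset.sum_range_add (ff k) x y

private lemma Rk0 (k : ℕ) : RR k k = 0 :=
  Finset.sum_eq_zero fun j hj => by
    have : j < k := Finset.mem_range.mp hj
    simp [ff, Nat.choose_eq_zero_of_lt this]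

private lemma refl_ff (k L c : ℕ) (h : c + L = 4*k+3) :
    ∑ i ∈ range L, ff k (c+i) = RR k L := by
  rw [← Finset.sum_range_reflect (fun i => ff k (c+i)) L]
  refine Finset.sum_congr rfl fun j hj => ?_
  have hj' : j < L := Finset.mem_range.mp hj
  have h1 : c + (L - 1 - j) = 4*k+2 - j := by omega
  have h2 : 4*k+2 - (4*k+2 - j) = j := by omega
  simp only [ff, h1, h2]
  ring

private lemma tri (K : ℕ) (g : ℕ → ℤ) :
    ∑ n ∈ range K, ∑ i ∈ range (n+1), g i = ∑ i ∈ range K, ((K:ℤ) - i) * g i := by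
  induction K with
  | zero => simp
  | succ K ih =>
    rw [Finset.sum_range_succ, ih]
    have h1 : ∑ i ∈ range (K+1), (((K:ℕ)+1:ℤ) - i) * g i
        = ∑ i ∈ range (K+1), (((K:ℤ) - i) * g i + g i) := by
      refine Finset.sum_congr rfl fun i _ => by ring
    push_cast
    rw [h1, Finset.sum_add_distrib, Finset.sum_range_succ (fun i => ((K:ℤ) - i) * g i)]
    push_cast
    ring

private lemma hdvZ (k : ℕ) : RR k (4*k+3) = ((4*k+3).choose (2*k+1) : ℤ) := by
  have h := dv k k (4*k+2)
  have e1 : 4*k+2+1 = 4*k+3 := by omega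
  have e2 : k+k+1 = 2*k+1 := by omega
  rw [e1, e2] at h
  have hz := congrArg (fun n : ℕ => (n : ℤ)) h
  push_cast at hz
  simpa [RR, ff] using hz

private lemma hSu (k : ℕ) :
    2 * RR k (2*k+1) + ((2*k+1).choose k : ℤ)^2 = ((4*k+3).choose (2*k+1) : ℤ) := by
  have e : 4*k+3 = (2*k+2)+(2*k+1) := by omega
  have h1 : RR k (4*k+3) = RR k (2*k+2) + ∑ i ∈ range (2*k+1), ff k (2*k+2+i) := by
    rw [e, Rsplit]
  have h2 : ∑ i ∈ range (2*k+1), ff k (2*k+2+i) = RR k (2*k+1) :=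
    refl_ff k (2*k+1) (2*k+2) (by omega)
  have h3 : RR k (2*k+2) = RR k (2*k+1) + ff k (2*k+1) :=
    Finset.sum_range_succ (ff k) (2*k+1)
  have h4 : ff k (2*k+1) = ((2*k+1).choose k : ℤ)^2 := by
    have e4 : 4*k+2-(2*k+1) = 2*k+1 := by omega
    simp only [ff, e4]; ring
  have h5 := hdvZ k
  linarith [h1, h2, h3, h4, h5]

private lemma hYp (k : ℕ) :
    ∑ i ∈ range (2*k+1), gg k (2*k+2+i) = YY k + 2 * ((2*k+1).choose k : ℤ)^2 := by
  -- telescoping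
  have hrefl : YY k = ∑ i ∈ range (2*k+1), gg k (2*k-i) := by
    rw [YY, ← Finset.sum_range_reflect (gg k) (2*k+1)]
    refine Finset.sum_congr rfl fun j hj => ?_
    have : 2*k+1-1-j = 2*k-j := by omega
    rw [this]
  set V : ℕ → ℤ := fun i => ((2*k+2+i).choose (k+1) : ℤ) * ((2*k+1-i).choose (k+1) : ℤ)
    with hV
  have hterm : ∀ i ∈ range (2*k+1), gg k (2*k+2+i) - gg k (2*k-i) = V i - V (i+1) := by
    intro i hi
    have hik : i ≤ 2*k := by have := Finset.mem_range.mp hi; omega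
    have e1 : 4*k+2-(2*k+2+i) = 2*k-i := by omega
    have e2 : 4*k+2-(2*k-i) = 2*k+2+i := by omega
    have e3 : 2*k+1-i = (2*k-i)+1 := by omega
    have e4 : 2*k+1-(i+1) = 2*k-i := by omega
    have e5 : 2*k+2+(i+1) = (2*k+2+i)+1 := by omega
    have p1 : ((2*k-i)+1).choose (k+1) = (2*k-i).choose k + (2*k-i).choose (k+1) :=
      Nat.choose_succ_succ _ _
    have p2 : ((2*k+2+i)+1).choose (k+1)
        = (2*k+2+i).choose k + (2*k+2+i).choose (k+1) := Nat.choose_succ_succ _ _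
    simp only [gg, hV, e1, e2, e3, e4, e5, p1, p2]
    push_cast
    ring
  have hsum : ∑ i ∈ range (2*k+1), (V i - V (i+1)) = V 0 - V (2*k+1) :=
    Finset.sum_range_sub' V (2*k+1)
  have hV0 : V 0 = 2 * ((2*k+1).choose k : ℤ)^2 := by
    have e0 : 2*k+2+0 = (2*k+1)+1 := by omega
    have e1 : 2*k+1-0 = 2*k+1 := by omega
    have p : ((2*k+1)+1).choose (k+1) = (2*k+1).choose k + (2*k+1).choose (k+1) :=
      Nat.choose_succ_succ _ _
    have psymm : (2*k+1).choose (k+1) = (2*k+1).choose k := by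
      have h := Nat.choose_symm (n := 2*k+1) (k := k+1) (by omega)
      rw [show 2*k+1-(k+1) = k from by omega] at h
      exact h.symm
    simp only [hV, e0, e1, p, psymm]
    push_cast
    ring
  have hVlast : V (2*k+1) = 0 := by
    have e1 : 2*k+1-(2*k+1) = 0 := by omega
    simp [hV, e1, Nat.choose_eq_zero_of_lt (Nat.succ_pos k)]
  have := Finset.sum_sub_distrib (f := fun i => gg k (2*k+2+i)) (g := fun i => gg k (2*k-i))
    (s := range (2*k+1))
  calc ∑ i ∈ range (2*k+1), gg k (2*k+2+i)
      = ∑ i ∈ range (2*k+1), gg k (2*k-i)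
        + ∑ i ∈ range (2*k+1), (gg k (2*k+2+i) - gg k (2*k-i)) := by
        rw [Finset.sum_sub_distrib]; ring
    _ = YY k + 2 * ((2*k+1).choose k : ℤ)^2 := by
        rw [← hrefl, Finset.sum_congr rfl hterm, hsum, hV0, hVlast]; ring

private lemma hY (k : ℕ) :
    2 * YY k = ((4*k+3).choose (2*k+2) : ℤ) - 3 * ((2*k+1).choose k : ℤ)^2 := by
  have h := dv (k+1) k (4*k+2)
  have e1 : 4*k+2+1 = 4*k+3 := by omega
  have e2 : k+1+k+1 = 2*k+2 := by omega
  rw [e1, e2] at h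
  have hz := congrArg (fun n : ℕ => (n : ℤ)) h
  push_cast at hz
  have hfull : ∑ j ∈ range (4*k+3), gg k j = ((4*k+3).choose (2*k+2) : ℤ) := by
    simpa [gg] using hz
  have e : 4*k+3 = (2*k+2)+(2*k+1) := by omega
  have hsplit : ∑ j ∈ range (4*k+3), gg k j
      = ∑ j ∈ range (2*k+2), gg k j + ∑ i ∈ range (2*k+1), gg k (2*k+2+i) := by
    rw [e]; exact Finset.sum_range_add (gg k) (2*k+2) (2*k+1)
  have h22 : ∑ j ∈ range (2*k+2), gg k j = YY k + gg k (2*k+1) :=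
    Finset.sum_range_succ (gg k) (2*k+1)
  have hmid : gg k (2*k+1) = ((2*k+1).choose k : ℤ)^2 := by
    have e4 : 4*k+2-(2*k+1) = 2*k+1 := by omega
    have psymm : (2*k+1).choose (k+1) = (2*k+1).choose k := by
      have h := Nat.choose_symm (n := 2*k+1) (k := k+1) (by omega)
      rw [show 2*k+1-(k+1) = k from by omega] at h
      exact h.symm
    simp only [gg, e4, psymm]; ring
  have hp := hYp k
  linarith [hfull, hsplit, h22, hmid, hp]

private lemma hWlem (k : ℕ) :
    ∑ n ∈ range (k+1), RR k (n+k+1)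
      = ((k:ℤ)+1) * RR k (2*k+1) - ((k:ℤ)+1) * YY k := by
  have hRn : ∀ n, RR k (n+k+1) = ∑ i ∈ range (n+1), ff k (k+i) := by
    intro n
    have e : n+k+1 = k+(n+1) := by omega
    rw [e, Rsplit, Rk0, zero_add]
  have h1 : ∑ n ∈ range (k+1), RR k (n+k+1)
      = ∑ i ∈ range (k+1), (((k:ℤ)+1) - i) * ff k (k+i) := by
    have := tri (k+1) (fun i => ff k (k+i))
    push_cast at this
    rw [Finset.sum_congr rfl fun n _ => hRn n, this]
  have hmul : ∀ i ∈ range (k+1), (i:ℤ) * ff k (k+i) = ((k:ℤ)+1) * gg k (k+i) := by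
    intro i hi
    have hc := Nat.choose_succ_right_eq (k+i) k
    have e : k+i-k = i := by omega
    rw [e] at hc
    have e2 : 4*k+2-(k+i) = 3*k+2-i := by have := Finset.mem_range.mp hi; omega
    have hz := congrArg (fun n : ℕ => (n : ℤ)) hc
    push_cast at hz
    simp only [ff, gg]
    nlinarith [hz]
  have hsum1 : ∑ i ∈ range (k+1), ff k (k+i) = RR k (2*k+1) := by
    have e : 2*k+1 = k+(k+1) := by omega
    rw [e, Rsplit, Rk0, zero_add]
  have hsum2 : ∑ i ∈ range (k+1), gg k (k+i) = YY k := by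
    have e : 2*k+1 = k+(k+1) := by omega
    rw [YY, e, Finset.sum_range_add (gg k) k (k+1)]
    have hz : ∑ j ∈ range k, gg k j = 0 :=
      Finset.sum_eq_zero fun j hj => by
        have : j < k+1 := by have := Finset.mem_range.mp hj; omega
        simp [gg, Nat.choose_eq_zero_of_lt this]
    rw [hz, zero_add]
  calc ∑ n ∈ range (k+1), RR k (n+k+1)
      = ∑ i ∈ range (k+1), (((k:ℤ)+1) * ff k (k+i) - (i:ℤ) * ff k (k+i)) := by
        rw [h1]; exact Finset.sum_congr rfl fun i _ => by ring
    _ = ((k:ℤ)+1) * RR k (2*k+1) - ((k:ℤ)+1) * YY k := by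
        rw [Finset.sum_sub_distrib, ← Finset.mul_sum, hsum1,
          Finset.sum_congr rfl hmul, ← Finset.mul_sum, hsum2]

theorem stmt_3 (k : ℕ) (hk : 0 < k) :
    (∑ n ∈ Finset.range (k + 1), ∑ m ∈ Finset.range (k + 1),
        ((n + m + k + 1).choose k * (3 * k - n - m + 1).choose k : ℤ)) =
      (k + 1) * (((4 * k + 3).choose (2 * k + 2) : ℤ) -
        2 * ((2 * k + 1).choose k : ℤ) ^ 2) := by
  have hinner : ∀ n ∈ range (k+1),
      ∑ m ∈ range (k+1), ((n + m + k + 1).choose k * (3 * k - n - m + 1).choose k : ℤ)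
        = RR k (4*k+3) - RR k (n+k+1) - RR k (2*k+1-n) := by
    intro n hn
    have hnk : n ≤ k := by have := Finset.mem_range.mp hn; omega
    have hterm : ∀ m ∈ range (k+1),
        ((n + m + k + 1).choose k * (3 * k - n - m + 1).choose k : ℤ)
          = ff k ((n+k+1)+m) := by
      intro m hm
      have hmk : m ≤ k := by have := Finset.mem_range.mp hm; omega
      have e1 : (n+k+1)+m = n+m+k+1 := by omega
      have e2 : 4*k+2-(n+m+k+1) = 3*k-n-m+1 := by omega
      simp only [ff, e1, e2]
    rw [Finset.sum_congr rfl hterm]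
    have hsplit : RR k ((n+k+1)+(k+1)) = RR k (n+k+1) + ∑ m ∈ range (k+1), ff k ((n+k+1)+m) :=
      Rsplit k (n+k+1) (k+1)
    have hsplit2 : RR k (4*k+3)
        = RR k ((n+k+1)+(k+1)) + ∑ i ∈ range (2*k+1-n), ff k ((n+2*k+2)+i) := by
      have e : 4*k+3 = ((n+k+1)+(k+1)) + (2*k+1-n) := by omega
      have e2 : (n+k+1)+(k+1) = n+2*k+2 := by omega
      rw [e, Rsplit, e2]
    have htail : ∑ i ∈ range (2*k+1-n), ff k ((n+2*k+2)+i) = RR k (2*k+1-n) :=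
      refl_ff k (2*k+1-n) (n+2*k+2) (by omega)
    rw [htail] at hsplit2
    linarith [hsplit, hsplit2]
  have hrefl2 : ∑ n ∈ range (k+1), RR k (2*k+1-n) = ∑ n ∈ range (k+1), RR k (n+k+1) := by
    rw [← Finset.sum_range_reflect (fun n => RR k (n+k+1)) (k+1)]
    refine Finset.sum_congr rfl fun n hn => ?_
    have hnk : n ≤ k := by have := Finset.mem_range.mp hn; omega
    have e : (k+1-1-n)+k+1 = 2*k+1-n := by omega
    rw [e]
  have hS : (∑ n ∈ Finset.range (k + 1), ∑ m ∈ Finset.range (k + 1),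
      ((n + m + k + 1).choose k * (3 * k - n - m + 1).choose k : ℤ))
      = ((k:ℤ)+1) * RR k (4*k+3) - 2 * ∑ n ∈ range (k+1), RR k (n+k+1) := by
    rw [Finset.sum_congr rfl hinner]
    rw [Finset.sum_sub_distrib, Finset.sum_sub_distrib, Finset.sum_const, card_range, hrefl2]
    ring
  have hA := hdvZ k
  have hB := hSu k
  have hC := hY k
  have hD := hWlem k
  rw [hS, hD]
  linear_combination ((k:ℤ)+1) * hA - ((k:ℤ)+1) * hB + ((k:ℤ)+1) * hC
end

section
/- Microscopic kernel limit: fix complex numbers a and b with a + b != 0. Setting z = 1 - a/N and w = 1 - b/N, the kernel K_M(zw) = sum_{p=0}^{M-1} (zw)^p with M = N + L (L fixed) satisfies K_M(zw) / N -> (1 - e^{-(a+b)})/(a+b) as N -> infinity. -/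
/-!
With `g N := (1 - a/N)(1 - b/N) - 1 = -(a+b)/N + ab/N²` we have `N g N → -(a+b)`, so
`(1 + g N)^(N+L) → exp (-(a+b))` (the shift by `L` only contributes a factor `(1 + g N)^L → 1`).
Summing the geometric series, `K_{N+L}(1 + g N) / N = ((1 + g N)^(N+L) - 1) / (N g N)`,
and the denominator tends to `-(a+b) ≠ 0`.
-/

open Filter Topology Complex

theorem Complex.tendsto_one_add_pow_add_exp_of_tendsto {g : ℕ → ℂ} {t : ℂ} (L : ℕ)
    (hg : Tendsto (fun n ↦ n * g n) atTop (𝓝 t)) :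
    Tendsto (fun n ↦ (1 + g n) ^ (n + L)) atTop (𝓝 (exp t)) := by
  have hg0 : Tendsto g atTop (𝓝 0) := by
    have h := hg.mul (tendsto_inv_atTop_nhds_zero_nat (𝕜 := ℂ))
    rw [mul_zero] at h
    refine h.congr' ?_
    filter_upwards [eventually_ne_atTop 0] with n hn
    field_simp
  have hshift : Tendsto (fun n ↦ (1 + g n) ^ L) atTop (𝓝 1) := by
    simpa using (hg0.const_add 1).pow L
  simpa only [pow_add, mul_one] using (tendsto_one_add_pow_exp_of_tendsto hg).mul hshift

theorem Complex.tendsto_geom_sum_add_div_of_tendsto {g : ℕ → ℂ} {t : ℂ} (ht : t ≠ 0) (L : ℕ)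
    (hg : Tendsto (fun n ↦ n * g n) atTop (𝓝 t)) :
    Tendsto (fun n ↦ (∑ p ∈ Finset.range (n + L), (1 + g n) ^ p) / n) atTop
      (𝓝 ((exp t - 1) / t)) := by
  have hlim := ((tendsto_one_add_pow_add_exp_of_tendsto L hg).sub_const 1).div hg ht
  refine hlim.congr' ?_
  filter_upwards [hg.eventually_ne ht] with n hn
  have hgn : g n ≠ 0 := fun h ↦ by simp [h] at hn
  rw [Pi.div_apply, geom_sum_eq (by simpa using hgn), add_sub_cancel_left, div_div, mul_comm]

theorem tendsto_natCast_mul_one_sub_div_mul_one_sub_div_sub_one (a b : ℂ) :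
    Tendsto (fun N : ℕ ↦ N * ((1 - a / N) * (1 - b / N) - 1)) atTop (𝓝 (-(a + b))) := by
  have h : Tendsto (fun N : ℕ ↦ -(a + b) + a * b * (N : ℂ)⁻¹) atTop (𝓝 (-(a + b) + a * b * 0)) :=
    tendsto_const_nhds.add (tendsto_inv_atTop_nhds_zero_nat.const_mul _)
  rw [mul_zero, add_zero] at h
  refine h.congr' ?_
  filter_upwards [eventually_ne_atTop 0] with N hN
  field_simp
  ring

theorem stmt_9 (a b : ℂ) (hab : a + b ≠ 0) (L : ℕ) :
    Tendsto
      (fun N : ℕ =>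
        (∑ p ∈ Finset.range (N + L), ((1 - a / N) * (1 - b / N)) ^ p) / (N : ℂ))
      atTop (nhds ((1 - Complex.exp (-(a + b))) / (a + b))) := by
  have h := tendsto_geom_sum_add_div_of_tendsto (neg_ne_zero.mpr hab) L
    (tendsto_natCast_mul_one_sub_div_mul_one_sub_div_sub_one a b)
  rw [div_neg, ← neg_div, neg_sub] at h
  simpa only [add_sub_cancel] using h
end

section
/- Let f be the function f(a1,a2,b1,b2) = (I(a1+b1)I(a2+b2) - I(a1+b2)I(a2+b1)) / ((a2-a1)(b2-b1)) where I(x) = (1-e^{-x})/x. Then f admits the integral representation f(a1,a2,b1,b2) = -∫_0^1 ∫_0^1 [I'(a(u)+b_1)I'(a_2+b(v)) - I''(a(u)+b(v))I(a_2+b_1)] du dv, where a(u) = a_1 + u(a_2-a_1) and b(v) = b_1 + v(b_2-b_1). -/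
/-!
`I` is the difference quotient of the entire function `1 - e^{-z}` at `0`, hence entire, and the
identity holds for every entire `F` in place of `I`. With `a(u) = a₁ + u(a₂ - a₁)` and
`b(v) = b₁ + v(b₂ - b₁)`, the integrand is `∂ᵥ∂ᵤ G / ((a₂ - a₁)(b₂ - b₁))` for
`G(u, v) = F(a(u) + b₁) F(a₂ + b(v)) - F(a(u) + b(v)) F(a₂ + b₁)`, so the double integral is the
alternating sum of `G` over the corners of the unit square; `G` vanishes on the sides `u = 1` and
`v = 0`, and `G(0, 1)` is the numerator of the left-hand side.
-/

noncomputable def Ifun : ℂ → ℂ := fun x => if x = 0 then 1 else (1 - Complex.exp (-x)) / x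

open intervalIntegral MeasureTheory

theorem Ifun_eq_dslope : Ifun = dslope (fun z => 1 - Complex.exp (-z)) 0 := by
  ext z
  rcases eq_or_ne z 0 with rfl | hz
  · have : HasDerivAt (fun z : ℂ => 1 - Complex.exp (-z)) 1 0 := by
      simpa using ((hasDerivAt_neg (0 : ℂ)).cexp).const_sub 1
    simp [Ifun, this.deriv]
  · simp [Ifun, hz, dslope_of_ne, slope, div_eq_inv_mul]

theorem differentiable_Ifun : Differentiable ℂ Ifun := by
  rw [Ifun_eq_dslope, ← differentiableOn_univ, Complex.differentiableOn_dslope Filter.univ_mem,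
    differentiableOn_univ]
  fun_prop

theorem integral_integral_eq_of_hasDerivAt {E : Type*} [NormedAddCommGroup E] [NormedSpace ℝ E]
    [CompleteSpace E] {φ ψ χ : ℝ → ℝ → E} {a b c d : ℝ}
    (hφ : ∀ u v, HasDerivAt (φ · v) (ψ u v) u) (hψ : ∀ u v, HasDerivAt (ψ u ·) (χ u v) v)
    (hψc : IntervalIntegrable (ψ · c) volume a b) (hψd : IntervalIntegrable (ψ · d) volume a b)
    (hχ : ∀ u, IntervalIntegrable (χ u) volume c d) :
    ∫ u in a..b, ∫ v in c..d, χ u v = φ b d - φ a d - (φ b c - φ a c) := by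
  have inner (u : ℝ) : ∫ v in c..d, χ u v = ψ u d - ψ u c :=
    integral_eq_sub_of_hasDerivAt (fun v _ => hψ u v) (hχ u)
  simp_rw [inner]
  rw [integral_sub hψd hψc, integral_eq_sub_of_hasDerivAt (fun u _ => hφ u d) hψd,
    integral_eq_sub_of_hasDerivAt (fun u _ => hφ u c) hψc]

theorem hasDerivAt_add_ofReal_mul (c d : ℂ) (t : ℝ) : HasDerivAt (fun t : ℝ => c + t * d) d t := by
  simpa using ((hasDerivAt_id (t : ℂ)).mul_const d |>.const_add c).comp_ofReal

theorem det_div_eq_neg_integral_integral {F : ℂ → ℂ} (hF : Differentiable ℂ F) {a₁ a₂ b₁ b₂ : ℂ}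
    (ha : a₁ ≠ a₂) (hb : b₁ ≠ b₂) :
    (F (a₁ + b₁) * F (a₂ + b₂) - F (a₁ + b₂) * F (a₂ + b₁)) / ((a₂ - a₁) * (b₂ - b₁)) =
      -∫ u in (0:ℝ)..1, ∫ v in (0:ℝ)..1,
          (deriv F ((a₁ + (u:ℂ) * (a₂ - a₁)) + b₁) * deriv F (a₂ + (b₁ + (v:ℂ) * (b₂ - b₁))) -
            deriv (deriv F) ((a₁ + (u:ℂ) * (a₂ - a₁)) + (b₁ + (v:ℂ) * (b₂ - b₁))) *
              F (a₂ + b₁)) := by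
  have hA : a₂ - a₁ ≠ 0 := sub_ne_zero.mpr ha.symm
  have hB : b₂ - b₁ ≠ 0 := sub_ne_zero.mpr hb.symm
  set a : ℝ → ℂ := fun u => a₁ + u * (a₂ - a₁) with a_def
  set b : ℝ → ℂ := fun v => b₁ + v * (b₂ - b₁) with b_def
  have ha' (u : ℝ) : HasDerivAt a (a₂ - a₁) u := hasDerivAt_add_ofReal_mul _ _ u
  have hb' (v : ℝ) : HasDerivAt b (b₂ - b₁) v := hasDerivAt_add_ofReal_mul _ _ v
  have hF' : Continuous (deriv F) := (hF.contDiff (n := 1)).continuous_deriv le_rfl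
  have hF'' : Continuous (deriv (deriv F)) := (hF.deriv.contDiff (n := 1)).continuous_deriv le_rfl
  have key := integral_integral_eq_of_hasDerivAt (a := 0) (b := 1) (c := 0) (d := 1)
    (φ := fun u v => (F (a u + b₁) * F (a₂ + b v) - F (a u + b v) * F (a₂ + b₁)) /
      ((a₂ - a₁) * (b₂ - b₁)))
    (ψ := fun u v => (deriv F (a u + b₁) * F (a₂ + b v) - deriv F (a u + b v) * F (a₂ + b₁)) /
      (b₂ - b₁))
    (χ := fun u v => deriv F (a u + b₁) * deriv F (a₂ + b v) -
      deriv (deriv F) (a u + b v) * F (a₂ + b₁))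
    (fun u v => by
      have h1 := (hF _).hasDerivAt.comp u ((ha' u).add_const b₁)
      have h2 := (hF _).hasDerivAt.comp u ((ha' u).add_const (b v))
      refine (((h1.mul_const _).sub (h2.mul_const _)).div_const _).congr_deriv ?_
      field_simp)
    (fun u v => by
      have h1 := (hF _).hasDerivAt.comp v ((hb' v).const_add a₂)
      have h2 := (hF.deriv _).hasDerivAt.comp v ((hb' v).const_add (a u))
      refine (((h1.const_mul _).sub (h2.mul_const _)).div_const _).congr_deriv ?_
      field_simp)
    (by apply Continuous.intervalIntegrable; fun_prop)
    (by apply Continuous.intervalIntegrable; fun_prop)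
    (fun u => by apply Continuous.intervalIntegrable; fun_prop)
  simp only [a_def, b_def] at key
  rw [key]
  push_cast
  simp only [zero_mul, one_mul, add_zero, add_sub_cancel]
  field_simp
  ring

theorem stmt_10 (a₁ a₂ b₁ b₂ : ℂ) (ha : a₁ ≠ a₂) (hb : b₁ ≠ b₂) :
    (Ifun (a₁ + b₁) * Ifun (a₂ + b₂) - Ifun (a₁ + b₂) * Ifun (a₂ + b₁)) /
        ((a₂ - a₁) * (b₂ - b₁)) =
      -∫ u in (0:ℝ)..1, ∫ v in (0:ℝ)..1,
          (deriv Ifun ((a₁ + (u:ℂ) * (a₂ - a₁)) + b₁) *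
              deriv Ifun (a₂ + (b₁ + (v:ℂ) * (b₂ - b₁))) -
            iteratedDeriv 2 Ifun ((a₁ + (u:ℂ) * (a₂ - a₁)) + (b₁ + (v:ℂ) * (b₂ - b₁))) *
              Ifun (a₂ + b₁)) := by
  rw [iteratedDeriv_succ, iteratedDeriv_one]
  exact det_div_eq_neg_integral_integral differentiable_Ifun ha hb
end

section
/- In particular, for tau a real number, det(I_{alpha_i + beta_j}(tau))_{i,j=1}^s > 0 whenever alpha_1 > alpha_2 > ... > alpha_s >= 0 and beta_1 > beta_2 > ... > beta_s >= 0 are non-negative integers, where I_r(tau) = ∫_0^1 x^r e^{-tau x} dx. -/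
/-
Andréief's identity writes `s! · det (I_{α i + β j}(τ))` as the integral over `[0,1]^s` of
`det (x_k ^ α_i) · det (x_k ^ β_j) · ∏ e^{-τ x_k}`. Reordering the nodes changes both generalized
Vandermonde determinants by the same sign, and for decreasing positive nodes each is positive:
by Rolle's theorem a nonzero combination of `s` monomials has at most `s - 1` positive zeros, so
the determinant never vanishes on the connected set of decreasing positive tuples, and at
`x_j = 2 ^ (s - 1 - j)` it is a classical Vandermonde determinant. Hence the integrand is
nonnegative on the cube and positive on an open subset of it.
-/

open Matrix Set MeasureTheory

theorem exists_interlacing_deriv_eq_zero {s : ℕ} {f : ℝ → ℝ} (hf : Differentiable ℝ f)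
    {x : Fin (s + 1) → ℝ} (hx : StrictAnti x) (hfx : ∀ j, f (x j) = 0) :
    ∃ y : Fin s → ℝ, StrictAnti y ∧ (∀ j, x j.succ < y j) ∧ ∀ j, deriv f (y j) = 0 := by
  have hRolle (j : Fin s) : ∃ y ∈ Ioo (x j.succ) (x j.castSucc), deriv f y = 0 :=
    exists_deriv_eq_zero (hx Fin.castSucc_lt_succ) hf.continuous.continuousOn
      ((hfx _).trans (hfx _).symm)
  choose y hy hy' using hRolle
  refine ⟨y, fun i j hij => ?_, fun j => (hy j).1, hy'⟩
  calc y j < x j.castSucc := (hy j).2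
    _ ≤ x i.succ := hx.antitone (Fin.succ_le_castSucc_iff.mpr hij)
    _ < y i := (hy i).1

theorem eq_zero_of_sum_mul_pow_eq_zero {s : ℕ} {e : Fin s → ℕ} (he : StrictAnti e)
    {x : Fin s → ℝ} (hx : StrictAnti x) (hx₀ : ∀ j, 0 < x j) {c : Fin s → ℝ}
    (h : ∀ j, ∑ i, c i * x j ^ e i = 0) : c = 0 := by
  induction s with
  | zero => exact funext fun i => i.elim0
  | succ s ih =>
    set m := e (Fin.last s)
    set e' : Fin s → ℕ := fun i => e i.castSucc - m - 1
    have he' (i : Fin s) : e i.castSucc = e' i + 1 + m := by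
      have := he (Fin.castSucc_lt_last i); simp only [e']; omega
    -- `q` is the sum divided by `t ^ m`: its last term is constant, so `q'` has one term fewer
    set q : ℝ → ℝ := fun t => ∑ i : Fin s, c i.castSucc * t ^ (e' i + 1) + c (Fin.last s)
    have hq (j : Fin (s + 1)) : q (x j) = 0 := by
      have hxm : x j ^ m * q (x j) = ∑ i, c i * x j ^ e i := by
        simp only [q, Fin.sum_univ_castSucc, he', mul_add, Finset.mul_sum, pow_add, m]
        ring_nf
      exact (mul_eq_zero.mp (hxm.trans (h j))).resolve_left (pow_ne_zero _ (hx₀ j).ne')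
    have hq' (t : ℝ) :
        HasDerivAt q (∑ i : Fin s, ((e' i + 1 : ℕ) * c i.castSucc) * t ^ e' i) t := by
      refine (HasDerivAt.fun_sum fun i _ => ?_).add_const _
      exact ((hasDerivAt_pow (e' i + 1) t).const_mul (c i.castSucc)).congr_deriv
        (by rw [Nat.add_sub_cancel]; ring)
    obtain ⟨y, hy, hxy, hqy⟩ := exists_interlacing_deriv_eq_zero
      (fun t => (hq' t).differentiableAt) hx hq
    have he'_anti : StrictAnti e' := fun i j hij => by
      have := he (Fin.castSucc_lt_castSucc_iff.mpr hij); simp only [he'] at this; omega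
    have hc' := ih he'_anti hy (fun j => (hx₀ _).trans (hxy j))
      (fun j => (hq' (y j)).deriv ▸ hqy j)
    have hcast (i : Fin s) : c i.castSucc = 0 := by
      have := congrFun hc' i
      exact (mul_eq_zero.mp this).resolve_left (by positivity)
    have hlast : c (Fin.last s) = 0 := by
      have := h 0
      simp only [Fin.sum_univ_castSucc, hcast, zero_mul, Finset.sum_const_zero, zero_add] at this
      exact (mul_eq_zero.mp this).resolve_right (pow_ne_zero _ (hx₀ 0).ne')
    funext i
    exact Fin.lastCases hlast hcast i

section GeneralizedVandermonde

variable {s : ℕ} {a : Fin s → ℕ}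

theorem det_pow_ne_zero (ha : StrictAnti a) {x : Fin s → ℝ} (hx : StrictAnti x)
    (hx₀ : ∀ j, 0 < x j) : (of fun i j => x j ^ a i).det ≠ 0 := fun h => by
  obtain ⟨c, hc, hcx⟩ := exists_vecMul_eq_zero_iff.mpr h
  exact hc <| eq_zero_of_sum_mul_pow_eq_zero ha hx hx₀ fun j => by
    simpa [vecMul, dotProduct] using congrFun hcx j

theorem det_pow_two_pow_rev_pos (ha : StrictAnti a) :
    0 < (of fun i j : Fin s => ((2 : ℝ) ^ (j.rev : ℕ)) ^ a i).det := by
  set v : Fin s → ℝ := fun i => 2 ^ a i.rev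
  have hv : (of fun i j : Fin s => ((2 : ℝ) ^ (j.rev : ℕ)) ^ a i) =
      (vandermonde v).submatrix Fin.revPerm Fin.revPerm := by
    ext i j
    simp only [of_apply, submatrix_apply, vandermonde, Fin.revPerm_apply, Fin.rev_rev, v,
      ← pow_mul, mul_comm]
  rw [hv, det_submatrix_equiv_self, det_vandermonde]
  refine Finset.prod_pos fun i _ => Finset.prod_pos fun j hj => sub_pos.mpr ?_
  exact pow_lt_pow_right₀ one_lt_two (ha (Fin.rev_lt_rev.mpr (Finset.mem_Ioi.mp hj)))

theorem convex_setOf_strictAnti_pos :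
    Convex ℝ {x : Fin s → ℝ | StrictAnti x ∧ ∀ j, 0 < x j} := by
  rintro x ⟨hx, hx₀⟩ y ⟨hy, hy₀⟩ p q hp hq hpq
  refine ⟨fun i j hij => ?_, fun j => convex_Ioi (0 : ℝ) (hx₀ j) (hy₀ j) hp hq hpq⟩
  have h := convex_Ioi (0 : ℝ) (sub_pos.mpr (hx hij)) (sub_pos.mpr (hy hij)) hp hq hpq
  simp only [mem_Ioi, smul_eq_mul] at h
  simp only [Pi.add_apply, Pi.smul_apply, smul_eq_mul]
  linarith

theorem det_pow_pos (ha : StrictAnti a) {x : Fin s → ℝ} (hx : StrictAnti x)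
    (hx₀ : ∀ j, 0 < x j) : 0 < (of fun i j => x j ^ a i).det := by
  set S := {x : Fin s → ℝ | StrictAnti x ∧ ∀ j, 0 < x j}
  set D : (Fin s → ℝ) → ℝ := fun x => (of fun i j => x j ^ a i).det
  have hD : Continuous D := Continuous.matrix_det (by fun_prop)
  have hbase : (fun j : Fin s => (2 : ℝ) ^ (j.rev : ℕ)) ∈ S :=
    ⟨fun i j hij => pow_lt_pow_right₀ one_lt_two (Fin.rev_lt_rev.mpr hij), fun j => by positivity⟩
  by_contra! hneg
  obtain ⟨y, ⟨hy, hy₀⟩, hDy⟩ := convex_setOf_strictAnti_pos.isPreconnected.intermediate_value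
    ⟨hx, hx₀⟩ hbase hD.continuousOn ⟨hneg, (det_pow_two_pow_rev_pos ha).le⟩
  exact det_pow_ne_zero ha hy hy₀ hDy

theorem det_pow_mul_det_pow_nonneg (ha : StrictAnti a) {b : Fin s → ℕ} (hb : StrictAnti b)
    {x : Fin s → ℝ} (hx₀ : ∀ j, 0 < x j) :
    0 ≤ (of fun i j => x j ^ a i).det * (of fun i j => x j ^ b i).det := by
  by_cases hinj : Function.Injective x
  · set σ := Tuple.sort (OrderDual.toDual ∘ x)
    have hσ : StrictAnti (x ∘ σ) :=
      (Tuple.monotone_sort (OrderDual.toDual ∘ x)).dual_right.strictAnti_of_injective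
        (hinj.comp σ.injective)
    have hperm (e : Fin s → ℕ) : (of fun i j => (x ∘ σ) j ^ e i).det =
        Equiv.Perm.sign σ * (of fun i j => x j ^ e i).det := by
      rw [← det_permute']; rfl
    have hsq : ((Equiv.Perm.sign σ : ℤ) : ℝ) * (Equiv.Perm.sign σ : ℤ) = 1 := by
      rw [← Int.cast_mul, ← Units.val_mul, Int.units_mul_self, Units.val_one, Int.cast_one]
    have hpos := mul_pos (det_pow_pos ha hσ fun j => hx₀ _) (det_pow_pos hb hσ fun j => hx₀ _)
    rw [hperm, hperm] at hpos
    linear_combination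
      hpos.le + (of fun i j => x j ^ a i).det * (of fun i j => x j ^ b i).det * hsq
  · obtain ⟨k, l, hxkl, hkl⟩ : ∃ k l, x k = x l ∧ k ≠ l := by
      simpa [Function.Injective] using hinj
    rw [det_zero_of_column_eq hkl fun i => by simp [hxkl], zero_mul]

end GeneralizedVandermonde

section PermuteCoordinates

variable {ι α : Type*} [MeasurableSpace α]

theorem MeasurableEquiv.piCongrLeft_perm_symm_apply (ρ : Equiv.Perm ι) (x : ι → α) :
    MeasurableEquiv.piCongrLeft (fun _ => α) ρ.symm x = x ∘ ρ := by
  ext k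
  rw [MeasurableEquiv.coe_piCongrLeft]
  simpa using Equiv.piCongrLeft_apply_apply (fun _ => α) ρ.symm x (ρ.symm.symm k)

variable [Fintype ι] {μ : Measure α} [SigmaFinite μ]

theorem integral_comp_perm (ρ : Equiv.Perm ι) (F : (ι → α) → ℝ) :
    ∫ x, F (x ∘ ρ) ∂Measure.pi (fun _ => μ) = ∫ x, F x ∂Measure.pi (fun _ => μ) := by
  simpa only [MeasurableEquiv.piCongrLeft_perm_symm_apply] using
    (measurePreserving_piCongrLeft (fun _ => μ) ρ.symm).integral_comp' F

theorem MeasureTheory.Integrable.comp_perm (ρ : Equiv.Perm ι) {F : (ι → α) → ℝ}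
    (hF : Integrable F (Measure.pi fun _ => μ)) :
    Integrable (fun x => F (x ∘ ρ)) (Measure.pi fun _ => μ) := by
  have := ((measurePreserving_piCongrLeft (fun _ => μ) ρ.symm).integrable_comp_emb
    (MeasurableEquiv.measurableEmbedding _)).mpr hF
  simpa only [Function.comp_def, MeasurableEquiv.piCongrLeft_perm_symm_apply] using this

end PermuteCoordinates

section Andreief

variable {ι α : Type*} [Fintype ι] [DecidableEq ι] (f g : ι → α → ℝ)

theorem det_mul_prod_eq_sum_perm (x : ι → α) :
    (of fun i k => f i (x k)).det * ∏ k, g k (x k) =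
      ∑ σ : Equiv.Perm ι, (Equiv.Perm.sign σ : ℝ) * ∏ k, (f (σ k) (x k) * g k (x k)) := by
  simp only [det_apply', of_apply, Finset.sum_mul, Finset.prod_mul_distrib, mul_assoc]

theorem det_mul_det_eq_sum_perm (x : ι → α) :
    (of fun i k => f i (x k)).det * (of fun j k => g j (x k)).det =
      ∑ ρ : Equiv.Perm ι, (of fun i k => f i ((x ∘ ρ) k)).det * ∏ k, g k ((x ∘ ρ) k) := by
  have hperm (ρ : Equiv.Perm ι) : (of fun i k => f i ((x ∘ ρ) k)).det =
      Equiv.Perm.sign ρ * (of fun i k => f i (x k)).det := by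
    rw [← det_permute']; rfl
  rw [← det_transpose (of fun j k => g j (x k)), det_apply' (of fun j k => g j (x k))ᵀ,
    Finset.mul_sum]
  refine Finset.sum_congr rfl fun ρ _ => ?_
  rw [hperm]
  simp only [transpose_apply, of_apply, Function.comp_apply]
  ring

variable [MeasurableSpace α] {μ : Measure α} [SigmaFinite μ]

theorem integrable_det_mul_prod (hfg : ∀ i j, Integrable (fun t => f i t * g j t) μ) :
    Integrable (fun x => (of fun i k => f i (x k)).det * ∏ k, g k (x k))
      (Measure.pi fun _ => μ) := by
  simp only [det_mul_prod_eq_sum_perm]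
  exact integrable_finsetSum _ fun σ _ => (Integrable.fintype_prod fun k => hfg _ _).const_mul _

theorem det_integral_eq_integral_det_mul_prod
    (hfg : ∀ i j, Integrable (fun t => f i t * g j t) μ) :
    (of fun i j => ∫ t, f i t * g j t ∂μ).det =
      ∫ x, (of fun i k => f i (x k)).det * ∏ k, g k (x k) ∂Measure.pi (fun _ => μ) := by
  simp_rw [det_mul_prod_eq_sum_perm]
  rw [integral_finsetSum _ fun σ _ => ((Integrable.fintype_prod fun k => hfg _ _).const_mul _),
    det_apply']
  refine Finset.sum_congr rfl fun σ _ => ?_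
  rw [integral_const_mul, integral_fintype_prod_eq_prod (fun k t => f (σ k) t * g k t)]
  rfl

/-- **Andréief's identity**. -/
theorem factorial_card_mul_det_integral (hfg : ∀ i j, Integrable (fun t => f i t * g j t) μ) :
    (Fintype.card ι).factorial * (of fun i j => ∫ t, f i t * g j t ∂μ).det =
      ∫ x, (of fun i k => f i (x k)).det * (of fun j k => g j (x k)).det
        ∂Measure.pi (fun _ => μ) := by
  simp_rw [det_mul_det_eq_sum_perm]
  rw [integral_finsetSum _ fun ρ _ => (integrable_det_mul_prod f g hfg).comp_perm ρ,
    Finset.sum_congr rfl fun ρ _ =>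
      integral_comp_perm ρ fun x => (of fun i k => f i (x k)).det * ∏ k, g k (x k),
    ← det_integral_eq_integral_det_mul_prod f g hfg, Finset.sum_const, Finset.card_univ,
    Fintype.card_perm, nsmul_eq_mul]

end Andreief

theorem setIntegral_pos_of_continuous {X : Type*} [TopologicalSpace X] [MeasurableSpace X]
    [OpensMeasurableSpace X] {ν : Measure X} [ν.IsOpenPosMeasure] {H : X → ℝ} {K : Set X}
    (hH : Continuous H) (hK : MeasurableSet K) (hHK : IntegrableOn H K ν)
    (hK₀ : ∀ x ∈ K, 0 ≤ H x) {x₀ : X} (hx₀ : x₀ ∈ interior K) (hHx₀ : 0 < H x₀) :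
    0 < ∫ x in K, H x ∂ν := by
  rw [setIntegral_pos_iff_support_of_nonneg_ae ((ae_restrict_iff' hK).mpr (.of_forall hK₀)) hHK]
  have hopen : IsOpen (Function.support H ∩ interior K) := hH.isOpen_support.inter isOpen_interior
  exact (hopen.measure_pos ν ⟨x₀, hHx₀.ne', hx₀⟩).trans_le
    (measure_mono (inter_subset_inter_right _ interior_subset))

theorem det_pow_mul_det_exp_mul_pow {s : ℕ} (τ : ℝ) (a b : Fin s → ℕ) (x : Fin s → ℝ) :
    (of fun i k => x k ^ a i).det * (of fun j k => Real.exp (-τ * x k) * x k ^ b j).det =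
      (∏ k, Real.exp (-τ * x k)) *
        ((of fun i k => x k ^ a i).det * (of fun j k => x k ^ b j).det) := by
  have h := det_mul_row (fun k => Real.exp (-τ * x k)) (of fun j k => x k ^ b j)
  simp only [of_apply] at h
  rw [h]
  ring

theorem integral_det_pow_mul_det_exp_mul_pow_pos {s : ℕ} (τ : ℝ) {a b : Fin s → ℕ}
    (ha : StrictAnti a) (hb : StrictAnti b) :
    0 < ∫ x in univ.pi fun _ => Ioc (0 : ℝ) 1,
      (of fun i k => x k ^ a i).det * (of fun j k => Real.exp (-τ * x k) * x k ^ b j).det := by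
  have hcont : Continuous fun x : Fin s → ℝ =>
      (of fun i k => x k ^ a i).det * (of fun j k => Real.exp (-τ * x k) * x k ^ b j).det :=
    (Continuous.matrix_det (by fun_prop)).mul (Continuous.matrix_det (by fun_prop))
  have hbox : (univ.pi fun _ : Fin s => Ioc (0 : ℝ) 1) ⊆ Icc 0 1 :=
    fun x hx => ⟨fun k => (hx k trivial).1.le, fun k => (hx k trivial).2⟩
  set x₀ : Fin s → ℝ := fun k => ((k : ℝ) + 2)⁻¹
  have hx₀ : StrictAnti x₀ := fun i j hij =>
    (inv_lt_inv₀ (by positivity) (by positivity)).mpr (by simpa using hij)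
  have hx₀_mem (k : Fin s) : x₀ k ∈ Ioo 0 1 :=
    ⟨by positivity, inv_lt_one_of_one_lt₀ (lt_add_of_nonneg_of_lt k.val.cast_nonneg one_lt_two)⟩
  refine setIntegral_pos_of_continuous hcont (.univ_pi fun _ => measurableSet_Ioc)
    (hcont.integrableOn_Icc.mono_set hbox) (fun x hx => ?_) (x₀ := x₀) ?_ ?_
  · rw [det_pow_mul_det_exp_mul_pow]
    exact mul_nonneg (Finset.prod_nonneg fun k _ => (Real.exp_pos _).le)
      (det_pow_mul_det_pow_nonneg ha hb fun k => (hx k trivial).1)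
  · rw [interior_pi_set finite_univ]
    exact fun k _ => by simpa using hx₀_mem k
  · rw [det_pow_mul_det_exp_mul_pow]
    exact mul_pos (Finset.prod_pos fun k _ => Real.exp_pos _)
      (mul_pos (det_pow_pos ha hx₀ fun k => (hx₀_mem k).1)
        (det_pow_pos hb hx₀ fun k => (hx₀_mem k).1))

theorem stmt_13 (s : ℕ) (τ : ℝ) (α β : Fin s → ℕ)
    (hα : StrictAnti α) (hβ : StrictAnti β) :
    0 < Matrix.det (Matrix.of fun i j : Fin s =>
        ∫ x in (0:ℝ)..1, x ^ (α i + β j) * Real.exp (-τ * x)) := by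
  have hentry (i j : Fin s) : ∫ x in (0:ℝ)..1, x ^ (α i + β j) * Real.exp (-τ * x) =
      ∫ t in Ioc 0 1, t ^ α i * (Real.exp (-τ * t) * t ^ β j) := by
    rw [intervalIntegral.integral_of_le zero_le_one]
    congr 1 with t
    ring
  have hint (i j : Fin s) : Integrable (fun t => t ^ α i * (Real.exp (-τ * t) * t ^ β j))
      (volume.restrict (Ioc 0 1)) :=
    (Continuous.integrableOn_Icc (by fun_prop)).mono_set Ioc_subset_Icc_self
  have handreief := factorial_card_mul_det_integral (fun i t => t ^ α i)
    (fun j t => Real.exp (-τ * t) * t ^ β j) hint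
  rw [← Measure.restrict_pi_pi, ← volume_pi, Fintype.card_fin] at handreief
  simp_rw [hentry]
  exact pos_of_mul_pos_right (handreief ▸ integral_det_pow_mul_det_exp_mul_pow_pos τ hα hβ)
    (Nat.cast_nonneg _)
end

section
/- Expansion of a determinant of shifted analytic functions: let f_1,...,f_s be analytic near z in C. Then det(f_j(z + y_i))_{i,j=1}^s = sum over strictly increasing sequences 0 <= n_1 < ... < n_s of [det(f_j^{(n_i)}(z))_{i,j} / (n_1! ... n_s!)] * det(y_i^{n_j})_{i,j}. -/
open Matrix

lemma summable_pi_prod {s : ℕ} (g : Fin s → ℕ → ℝ) (h0 : ∀ i n, 0 ≤ g i n)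
    (hg : ∀ i, Summable (g i)) :
    Summable (fun m : Fin s → ℕ => ∏ i, g i (m i)) := by
  induction s with
  | zero => exact .of_finite
  | succ s ih =>
    have h1 : Summable (fun m : Fin s → ℕ => ∏ i : Fin s, g i.succ (m i)) :=
      ih (fun i => g i.succ) (fun i n => h0 _ _) (fun i => hg i.succ)
    have key : Summable (fun p : ℕ × (Fin s → ℕ) =>
        g 0 p.1 * ∏ i : Fin s, g i.succ (p.2 i)) := by
      refine Summable.mul_of_nonneg (f := g 0)
        (g := fun m : Fin s → ℕ => ∏ i : Fin s, g i.succ (m i)) (hg 0) h1 ?_ ?_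
      · intro n; exact h0 _ _
      · intro m; exact Finset.prod_nonneg fun i _ => h0 _ _
    refine ((Fin.consEquiv (fun _ : Fin (s+1) => ℕ)).summable_iff
      (f := fun m : Fin (s+1) → ℕ => ∏ i, g i (m i))).1 ?_
    refine key.congr fun p => ?_
    simp [Fin.consEquiv, Fin.prod_univ_succ]

lemma hasSum_pi_prod {s : ℕ} (g : Fin s → ℕ → ℂ) (x : Fin s → ℂ)
    (hn : ∀ i, Summable fun n => ‖g i n‖) (hg : ∀ i, HasSum (g i) (x i)) :
    HasSum (fun m : Fin s → ℕ => ∏ i, g i (m i)) (∏ i, x i) := by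
  induction s with
  | zero =>
    have h := hasSum_single (f := fun m : Fin 0 → ℕ => ∏ i, g i (m i))
      (fun _ : Fin 0 => 0) (fun b' hb' => absurd (Subsingleton.elim _ _) hb')
    simpa using h
  | succ s ih =>
    have h1 : HasSum (fun m : Fin s → ℕ => ∏ i : Fin s, g i.succ (m i))
        (∏ i : Fin s, x i.succ) :=
      ih (fun i => g i.succ) (fun i => x i.succ) (fun i => hn i.succ) (fun i => hg i.succ)
    have hnorm : Summable (fun m : Fin s → ℕ => ‖∏ i : Fin s, g i.succ (m i)‖) := by
      refine (summable_pi_prod (fun i n => ‖g i.succ n‖) (fun i n => norm_nonneg _)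
        (fun i => hn i.succ)).congr fun m => ?_
      rw [norm_prod]
    have hpair : HasSum (fun p : ℕ × (Fin s → ℕ) =>
        g 0 p.1 * ∏ i : Fin s, g i.succ (p.2 i)) (x 0 * ∏ i : Fin s, x i.succ) := by
      refine HasSum.mul (f := g 0)
        (g := fun m : Fin s → ℕ => ∏ i : Fin s, g i.succ (m i)) (hg 0) h1 ?_
      exact (Summable.mul_norm (hn 0) hnorm).of_norm
    rw [← (Fin.consEquiv (fun _ : Fin (s+1) => ℕ)).hasSum_iff]
    have hx : ∏ i : Fin (s+1), x i = x 0 * ∏ i : Fin s, x i.succ := Fin.prod_univ_succ x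
    rw [show ((fun m : Fin (s+1) → ℕ => ∏ i, g i (m i)) ∘
        (Fin.consEquiv (fun _ : Fin (s+1) => ℕ))) = fun p : ℕ × (Fin s → ℕ) =>
        g 0 p.1 * ∏ i : Fin s, g i.succ (p.2 i) from funext fun p => by
          simp [Fin.consEquiv, Fin.prod_univ_succ], hx]
    exact hpair

noncomputable def sortEquiv (s : ℕ) :
    ({n : Fin s → ℕ // StrictMono n} × Equiv.Perm (Fin s)) ≃
      {m : Fin s → ℕ // Function.Injective m} := by
  refine Equiv.ofBijective
    (fun p => ⟨p.1.1 ∘ p.2, p.1.2.injective.comp p.2.injective⟩) ⟨?_, ?_⟩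
  · rintro ⟨⟨n, hn⟩, σ⟩ ⟨⟨n', hn'⟩, σ'⟩ h
    have inst : WellFoundedLT (Fin s) := inferInstance
    have h' : n ∘ σ = n' ∘ σ' := congrArg Subtype.val h
    have hr : Set.range n = Set.range n' := by
      rw [← σ.surjective.range_comp n, h', σ'.surjective.range_comp]
    have hnn : n = n' := (StrictMono.range_inj hn hn').1 hr
    subst hnn
    have hσ : σ = σ' := Equiv.ext fun j => hn.injective (congrFun h' j)
    simp [hσ]
  · rintro ⟨m, hm⟩
    refine ⟨⟨⟨m ∘ Tuple.sort m, ?_⟩, (Tuple.sort m).symm⟩, ?_⟩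
    · exact (Tuple.monotone_sort m).strictMono_of_injective
        (hm.comp (Tuple.sort m).injective)
    · refine Subtype.ext (funext fun j => ?_)
      simp


theorem stmt_15 (s : ℕ) (z : ℂ) (r : ℝ) (hr : 0 < r) (f : Fin s → ℂ → ℂ)
    (hf : ∀ j, DifferentiableOn ℂ (f j) (Metric.ball z r))
    (y : Fin s → ℂ) (hy : ∀ i, ‖y i‖ < r) :
    HasSum
      (fun n : {n : Fin s → ℕ // StrictMono n} =>
        (Matrix.det (Matrix.of fun i j : Fin s => iteratedDerivWithin (n.1 i) (f j)
              (Metric.ball z r) z) / ∏ i, ((n.1 i).factorial : ℂ)) *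
          Matrix.det (Matrix.of fun i j : Fin s => y i ^ (n.1 j)))
      (Matrix.det (Matrix.of fun i j : Fin s => f j (z + y i))) := by
  have hzB : z ∈ Metric.ball z r := Metric.mem_ball_self hr
  have hD : ∀ (nn : ℕ) (j : Fin s), iteratedDerivWithin nn (f j) (Metric.ball z r) z
      = iteratedDeriv nn (f j) z := by
    intro nn j
    rw [iteratedDerivWithin_eq_iteratedFDerivWithin, iteratedDeriv_eq_iteratedFDeriv,
      iteratedFDerivWithin_of_isOpen _ Metric.isOpen_ball hzB]
  set c : ℕ → Fin s → ℂ := fun nn j => ((nn.factorial : ℂ))⁻¹ * iteratedDeriv nn (f j) z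
    with hc
  have hmem : ∀ i, z + y i ∈ Metric.ball z r := fun i => by
    simpa [Metric.mem_ball, dist_eq_norm] using hy i
  have hTay : ∀ i j : Fin s, HasSum (fun nn : ℕ => y i ^ nn * c nn j) (f j (z + y i)) := by
    intro i j
    have H := Complex.hasSum_taylorSeries_on_ball (hf j) (hmem i)
    have he : (fun nn : ℕ => y i ^ nn * c nn j)
        = fun nn : ℕ => (nn.factorial : ℂ)⁻¹ • (z + y i - z) ^ nn • iteratedDeriv nn (f j) z := by
      funext nn
      simp only [hc, smul_eq_mul, add_sub_cancel_left]
      ring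
    rw [he]
    exact H
  have hSumm : ∀ i j : Fin s, Summable (fun nn : ℕ => ‖y i ^ nn * c nn j‖) := by
    intro i j
    obtain ⟨t, hyt, htr⟩ := exists_between (hy i)
    have ht0 : 0 < t := lt_of_le_of_lt (norm_nonneg _) hyt
    have hmt : z + (t : ℂ) ∈ Metric.ball z r := by
      simp only [Metric.mem_ball, dist_eq_norm, add_sub_cancel_left, Complex.norm_real,
        Real.norm_eq_abs, abs_of_pos ht0]
      exact htr
    have H := (Complex.hasSum_taylorSeries_on_ball (hf j) hmt).summable
    obtain ⟨C, hC⟩ := H.tendsto_atTop_zero.norm.bddAbove_range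
    rw [mem_upperBounds] at hC
    have hCb : ∀ nn : ℕ, ‖c nn j‖ * t ^ nn ≤ C := by
      intro nn
      have h1 := hC _ (Set.mem_range_self nn)
      have h2 : ‖(nn.factorial : ℂ)⁻¹ • (z + (t : ℂ) - z) ^ nn • iteratedDeriv nn (f j) z‖
          = ‖c nn j‖ * t ^ nn := by
        simp only [smul_eq_mul, add_sub_cancel_left, hc, norm_mul, norm_pow, norm_inv,
          Complex.norm_natCast, Complex.norm_real, Real.norm_eq_abs, abs_of_pos ht0]
        ring
      rw [h2] at h1
      exact h1
    refine Summable.of_nonneg_of_le (fun nn => norm_nonneg _) (fun nn => ?_)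
      ((summable_geometric_of_lt_one (by positivity)
        ((div_lt_one ht0).2 hyt)).mul_left C)
    have h2 : ‖c nn j‖ ≤ C / t ^ nn := (le_div_iff₀ (pow_pos ht0 nn)).2 (hCb nn)
    calc ‖y i ^ nn * c nn j‖ = ‖y i‖ ^ nn * ‖c nn j‖ := by rw [norm_mul, norm_pow]
      _ ≤ ‖y i‖ ^ nn * (C / t ^ nn) := by
          gcongr
      _ = C * (‖y i‖ / t) ^ nn := by rw [div_pow]; ring
  -- Step A
  set G : (Fin s → ℕ) → ℂ := fun m => Matrix.det (Matrix.of fun i j : Fin s =>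
    y i ^ (m j) * c (m j) j) with hGdef
  have hG : HasSum G (Matrix.det (Matrix.of fun i j : Fin s => f j (z + y i))) := by
    have hσ : ∀ σ : Equiv.Perm (Fin s),
        HasSum (fun m : Fin s → ℕ =>
          (((Equiv.Perm.sign σ : ℤ) : ℂ)) * ∏ j, (y (σ j) ^ (m j) * c (m j) j))
          ((((Equiv.Perm.sign σ : ℤ) : ℂ)) * ∏ j, f j (z + y (σ j))) := by
      intro σ
      exact (hasSum_pi_prod (fun j nn => y (σ j) ^ nn * c nn j)
        (fun j => f j (z + y (σ j)))
        (fun j => hSumm (σ j) j) (fun j => hTay (σ j) j)).mul_left _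
    have hsum := hasSum_sum (f := fun (σ : Equiv.Perm (Fin s)) (m : Fin s → ℕ) =>
        (((Equiv.Perm.sign σ : ℤ) : ℂ)) * ∏ j, (y (σ j) ^ (m j) * c (m j) j))
      (s := Finset.univ) (fun σ _ => hσ σ)
    have h1 : (fun m : Fin s → ℕ => ∑ σ : Equiv.Perm (Fin s),
        (((Equiv.Perm.sign σ : ℤ) : ℂ)) * ∏ j, (y (σ j) ^ (m j) * c (m j) j)) = G := by
      funext m
      simp only [hGdef, Matrix.det_apply', Matrix.of_apply]
    have h2 : (∑ σ : Equiv.Perm (Fin s),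
        (((Equiv.Perm.sign σ : ℤ) : ℂ)) * ∏ j, f j (z + y (σ j)))
        = Matrix.det (Matrix.of fun i j : Fin s => f j (z + y i)) := by
      rw [Matrix.det_apply']
      simp only [Matrix.of_apply]
    rw [h1, h2] at hsum
    exact hsum
  -- Step B: factorization and support
  have hfact : ∀ m : Fin s → ℕ, G m = (∏ j, c (m j) j) *
      Matrix.det (Matrix.of fun i j : Fin s => y i ^ (m j)) := by
    intro m
    have h4 : (Matrix.of fun i j : Fin s => y i ^ (m j) * c (m j) j)
        = Matrix.of fun i j : Fin s => (fun j => c (m j) j) j *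
          (Matrix.of fun i j : Fin s => y i ^ (m j)) i j := by
      ext i j
      simp [mul_comm]
    show Matrix.det _ = _
    rw [h4, Matrix.det_mul_row]
  have hsupp : Function.support G ⊆ {m : Fin s → ℕ | Function.Injective m} := by
    intro m hm
    by_contra hinj
    apply hm
    simp only [Set.mem_setOf_eq, Function.Injective] at hinj
    push_neg at hinj
    obtain ⟨j1, j2, hj, hne⟩ := hinj
    have hdet : Matrix.det (Matrix.of fun i j : Fin s => y i ^ (m j)) = 0 :=
      Matrix.det_zero_of_column_eq hne (fun k => by simp [hj])
    rw [hfact m, hdet, mul_zero]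
  have hInj : HasSum (fun m : {m : Fin s → ℕ // Function.Injective m} => G m.1)
      (Matrix.det (Matrix.of fun i j : Fin s => f j (z + y i))) :=
    (hasSum_subtype_iff_of_support_subset hsupp).2 hG
  have htrans := ((sortEquiv s).hasSum_iff).2 hInj
  refine HasSum.prod_fiberwise htrans ?_
  rintro ⟨n, hn⟩
  have hcomp : ∀ σ : Equiv.Perm (Fin s),
      ((fun m : {m : Fin s → ℕ // Function.Injective m} => G m.1) ∘ (sortEquiv s))
        (⟨n, hn⟩, σ) = G (n ∘ σ) := fun σ => rfl
  have key : ∑ σ : Equiv.Perm (Fin s), G (n ∘ σ) =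
      (Matrix.det (Matrix.of fun i j : Fin s => iteratedDerivWithin (n i) (f j)
          (Metric.ball z r) z) / ∏ i, ((n i).factorial : ℂ)) *
        Matrix.det (Matrix.of fun i j : Fin s => y i ^ (n j)) := by
    have hstep : ∀ σ : Equiv.Perm (Fin s), G (n ∘ σ) =
        (((Equiv.Perm.sign σ : ℤ) : ℂ) * ∏ j, c (n (σ j)) j) *
          Matrix.det (Matrix.of fun i j : Fin s => y i ^ (n j)) := by
      intro σ
      rw [hfact (n ∘ σ)]
      have hsub : (Matrix.of fun i j : Fin s => y i ^ ((n ∘ σ) j))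
          = (Matrix.of fun i j : Fin s => y i ^ (n j)).submatrix id σ := by
        ext i j
        simp
      rw [hsub, Matrix.det_permute']
      simp only [Function.comp_apply]
      ring
    rw [Finset.sum_congr rfl (fun σ _ => hstep σ), ← Finset.sum_mul]
    congr 1
    have h5 : Matrix.det (Matrix.of fun i j : Fin s => c (n i) j)
        = ∑ σ : Equiv.Perm (Fin s), ((Equiv.Perm.sign σ : ℤ) : ℂ) * ∏ j, c (n (σ j)) j := by
      rw [Matrix.det_apply']
      simp only [Matrix.of_apply]
    rw [← h5]
    have h3 : (Matrix.of fun i j : Fin s => c (n i) j) = Matrix.of fun i j : Fin s =>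
        (fun i => (((n i).factorial : ℂ))⁻¹) i * (Matrix.of fun i j : Fin s =>
          iteratedDeriv (n i) (f j) z) i j := by
      ext i j
      simp [hc]
    have h6 : (Matrix.of fun i j : Fin s => iteratedDerivWithin (n i) (f j)
        (Metric.ball z r) z) = Matrix.of fun i j : Fin s => iteratedDeriv (n i) (f j) z := by
      ext i j
      simp only [Matrix.of_apply, hD]
    rw [h3, Matrix.det_mul_column, h6, div_eq_mul_inv, mul_comm]
    congr 1
    rw [Finset.prod_inv_distrib]
  have hfin := hasSum_fintype (fun σ : Equiv.Perm (Fin s) => G (n ∘ σ))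
  rw [key] at hfin
  exact hfin.congr_fun fun σ => (hcomp σ).symm
end

section
/- For lists of non-negative integers mu (length K) and nu (length L), and small complex vectors alpha in C^K, beta in C^L, with sigma fixed such that Re(2*sigma + alpha_i + beta_j) > 1, the mixed partial derivative D^mu_alpha D^nu_beta of prod_{i=1}^K prod_{j=1}^L zeta(2*sigma + alpha_i + beta_j) evaluated at alpha = beta = 0 equals mu! * nu! * sum over pairs of K x L non-negative-integer matrices Q (with row sums mu) and R (with column sums nu) of prod_{i,j} zeta^{(Q_{ij} + R_{ij})}(2*sigma) / (Q_{ij}! R_{ij}!). -/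
open scoped BigOperators

/-- Partial derivative in the `i`-th coordinate. -/
noncomputable def pderivCoord {s : ℕ} (i : Fin s) (f : (Fin s → ℂ) → ℂ) :
    (Fin s → ℂ) → ℂ :=
  fun y => deriv (fun t => f (Function.update y i t)) (y i)

/-- The mixed partial derivative `D^μ = ∏ᵢ (∂/∂yᵢ)^{μᵢ}`. -/
noncomputable def mixedDeriv {s : ℕ} (μ : Fin s → ℕ) (f : (Fin s → ℂ) → ℂ) :
    (Fin s → ℂ) → ℂ :=
  ((List.ofFn (fun i : Fin s => (pderivCoord i)^[μ i])).foldr (· ∘ ·) id) f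

open Finset Function
open scoped Nat Topology

/-!
For fixed `α` the integrand is a product of one-variable functions of the `β j`, so `D^ν_β` at
`β = 0` is `∏ j ∂_t^{ν j} ∏ i ζ(2σ + α i + t)`, and the Leibniz rule expands each factor as a sum
over the columns of a matrix `R` with column sums `ν`. Near `α = 0` the result is a finite sum of
products of analytic functions of the single variables `α i`. The operator `D^μ_α` is additive on
analytic functions and acts factorwise on such products, and a second Leibniz expansion of each
factor produces the rows of a matrix `Q` with row sums `μ`.
-/

theorem Finset.Nat.sum_antidiagonalTuple_succ {M : Type*} [AddCommMonoid M] (k n : ℕ)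
    (G : (Fin (k + 1) → ℕ) → M) :
    ∑ q ∈ Nat.antidiagonalTuple (k + 1) n, G q =
      ∑ p ∈ antidiagonal n, ∑ q ∈ Nat.antidiagonalTuple k p.2, G (Fin.cons p.1 q) := by
  rw [sum_sigma']
  refine sum_nbij' (fun q => ⟨(q 0, n - q 0), Fin.tail q⟩) (fun x => Fin.cons x.1.1 x.2)
    ?_ ?_ (fun q _ => Fin.cons_self_tail q) ?_ (fun q _ => by simp)
  · intro q hq
    simp only [mem_sigma, HasAntidiagonal.mem_antidiagonal, Nat.mem_antidiagonalTuple,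
      Fin.sum_univ_succ] at hq ⊢
    exact ⟨by omega, by simp only [Fin.tail]; omega⟩
  · rintro ⟨⟨a, b⟩, q⟩ h
    simp only [mem_sigma, HasAntidiagonal.mem_antidiagonal, Nat.mem_antidiagonalTuple,
      Fin.sum_univ_succ] at h ⊢
    simpa [h.2] using h.1
  · rintro ⟨⟨a, b⟩, q⟩ h
    simp only [mem_sigma, HasAntidiagonal.mem_antidiagonal] at h
    simp [← h.1]

theorem iteratedDeriv_iteratedDeriv {𝕜 F : Type*} [NontriviallyNormedField 𝕜]
    [NormedAddCommGroup F] [NormedSpace 𝕜 F] (m n : ℕ) (f : 𝕜 → F) :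
    iteratedDeriv m (iteratedDeriv n f) = iteratedDeriv (m + n) f := by
  simp only [iteratedDeriv_eq_iterate, iterate_add_apply]

section Leibniz

variable {𝕜 : Type*} [NontriviallyNormedField 𝕜] [CharZero 𝕜]

theorem iteratedDeriv_fun_prod_fin {m n : ℕ} {f : Fin m → 𝕜 → 𝕜} {x : 𝕜}
    (hf : ∀ j, ContDiffAt 𝕜 n (f j) x) :
    iteratedDeriv n (fun t => ∏ j, f j t) x =
      n ! * ∑ q ∈ Nat.antidiagonalTuple m n, ∏ j, iteratedDeriv (q j) (f j) x / (q j)! := by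
  induction m generalizing n with
  | zero => cases n <;> simp [iteratedDeriv_const]
  | succ m ih =>
    rw [show (fun t => ∏ j, f j t) = fun t => f 0 t * ∏ j : Fin m, f j.succ t from
        funext fun t => Fin.prod_univ_succ _,
      iteratedDeriv_fun_mul (hf 0) (contDiffAt_prod fun j _ => hf j.succ),
      ← Nat.sum_antidiagonal_eq_sum_range_succ (fun a b => (n.choose a : 𝕜) *
        iteratedDeriv a (f 0) x * iteratedDeriv b (fun t => ∏ j : Fin m, f j.succ t) x),
      Nat.sum_antidiagonalTuple_succ, mul_sum]
    refine sum_congr rfl fun ⟨a, b⟩ hab => ?_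
    rw [HasAntidiagonal.mem_antidiagonal] at hab
    subst hab
    rw [ih fun j => (hf j.succ).of_le (by norm_cast; omega), mul_sum, mul_sum, mul_sum]
    refine sum_congr rfl fun q _ => ?_
    rw [Fin.prod_univ_succ]
    simp only [Fin.cons_zero, Fin.cons_succ]
    have hfac : ((a + b).choose a * a ! * b ! : 𝕜) = (a + b)! := by
      norm_cast
      rw [add_comm, Nat.mul_right_comm]
      exact Nat.add_choose_mul_factorial_mul_factorial b a
    have ha : (a ! : 𝕜) ≠ 0 := Nat.cast_ne_zero.mpr a.factorial_ne_zero
    rw [← hfac]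
    field_simp

theorem iteratedDeriv_prod_comp_add_zero {m n : ℕ} {f : Fin m → 𝕜 → 𝕜} {a : Fin m → 𝕜}
    (hf : ∀ j, ContDiffAt 𝕜 n (f j) (a j)) :
    iteratedDeriv n (fun t => ∏ j, f j (a j + t)) 0 =
      n ! * ∑ q ∈ Nat.antidiagonalTuple m n, ∏ j, iteratedDeriv (q j) (f j) (a j) / (q j)! := by
  have hshift : ∀ j, ContDiffAt 𝕜 n (fun t => f j (a j + t)) 0 := fun j =>
    ContDiffAt.comp (g := f j) 0 (by rw [add_zero]; exact hf j) (contDiffAt_const.add contDiffAt_id)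
  simp [iteratedDeriv_fun_prod_fin hshift, iteratedDeriv_comp_const_add]

end Leibniz

theorem Finset.prod_update_apply_update {ι α M : Type*} [Fintype ι] [DecidableEq ι]
    [CommMonoid M] (g : ι → α → M) (y : ι → α) (i : ι) (h : α → M) (t : α) :
    ∏ k, update g i h k (update y i t k) = h t * ∏ k ∈ univ.erase i, g k (y k) := by
  rw [← mul_prod_erase univ _ (mem_univ i), update_self, update_self]
  congr 1
  exact prod_congr rfl fun k hk => by
    rw [update_of_ne (ne_of_mem_erase hk), update_of_ne (ne_of_mem_erase hk)]

section PartialDerivatives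

variable {s : ℕ}

theorem pderivCoord_eq_fderiv {f : (Fin s → ℂ) → ℂ} {y : Fin s → ℂ}
    (hf : DifferentiableAt ℂ f y) (i : Fin s) :
    pderivCoord i f y = fderiv ℂ f y (Pi.single i 1) := by
  have hf' : HasFDerivAt f (fderiv ℂ f y) (update y i (y i)) := by
    rw [update_eq_self]
    exact hf.hasFDerivAt
  exact (hf'.comp_hasDerivAt (y i) (hasDerivAt_update y i (y i))).deriv

theorem pderivCoord_congr {V : Set (Fin s → ℂ)} (hV : IsOpen V) {f g : (Fin s → ℂ) → ℂ}
    (h : Set.EqOn f g V) (i : Fin s) : Set.EqOn (pderivCoord i f) (pderivCoord i g) V := by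
  intro y hy
  have hnear : ∀ᶠ t in 𝓝 (y i), update y i t ∈ V :=
    (hasDerivAt_update y i (y i)).continuousAt.preimage_mem_nhds
      (by rw [update_eq_self]; exact hV.mem_nhds hy)
  exact Filter.EventuallyEq.deriv_eq (hnear.mono fun t ht => h ht)

theorem AnalyticOnNhd.pderivCoord {V : Set (Fin s → ℂ)} (hV : IsOpen V)
    {f : (Fin s → ℂ) → ℂ} (hf : AnalyticOnNhd ℂ f V) (i : Fin s) :
    AnalyticOnNhd ℂ (_root_.pderivCoord i f) V := by
  have hfderiv : AnalyticOnNhd ℂ (fun y => fderiv ℂ f y (Pi.single i 1)) V := fun y hy =>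
    ((ContinuousLinearMap.apply ℂ ℂ (Pi.single i 1 : Fin s → ℂ)).analyticAt _).comp
      (hf.fderiv y hy)
  exact hfderiv.congr hV fun y hy => (pderivCoord_eq_fderiv (hf y hy).differentiableAt i).symm

theorem pderivCoord_sum {ι : Type*} (S : Finset ι) {F : ι → (Fin s → ℂ) → ℂ}
    {y : Fin s → ℂ} (hF : ∀ r ∈ S, DifferentiableAt ℂ (F r) y) (i : Fin s) :
    pderivCoord i (fun x => ∑ r ∈ S, F r x) y = ∑ r ∈ S, pderivCoord i (F r) y := by
  rw [pderivCoord_eq_fderiv (DifferentiableAt.fun_sum hF), fderiv_fun_sum hF,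
    FunLike.coe_sum, Finset.sum_apply]
  exact sum_congr rfl fun r hr => (pderivCoord_eq_fderiv (hF r hr) i).symm

theorem pderivCoord_const_mul (c : ℂ) (f : (Fin s → ℂ) → ℂ) (i : Fin s) :
    pderivCoord i (fun y => c * f y) = fun y => c * pderivCoord i f y :=
  funext fun _ => congrFun (deriv_const_mul_field' c) _

theorem pderivCoord_prod (g : Fin s → ℂ → ℂ) (i : Fin s) :
    pderivCoord i (fun y => ∏ k, g k (y k)) =
      fun y => ∏ k, update g i (deriv (g i)) k (y k) := by
  funext y
  have hslice : (fun t => ∏ k, g k (update y i t k)) =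
      fun t => g i t * ∏ k ∈ univ.erase i, g k (y k) := funext fun t => by
    simpa using prod_update_apply_update g y i (g i) t
  have hy := prod_update_apply_update g y i (deriv (g i)) (y i)
  rw [update_eq_self] at hy
  rw [hy, pderivCoord, hslice, deriv_mul_const_field']

theorem pderivCoord_iterate_prod (g : Fin s → ℂ → ℂ) (i : Fin s) (n : ℕ) :
    (pderivCoord i)^[n] (fun y => ∏ k, g k (y k)) =
      fun y => ∏ k, update g i (deriv^[n] (g i)) k (y k) := by
  induction n with
  | zero => simp
  | succ n ih =>
    rw [iterate_succ_apply', ih, pderivCoord_prod, update_idem, update_self,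
      iterate_succ_apply']

theorem foldr_pderivCoord_iterate_prod (μ : Fin s → ℕ) (g : Fin s → ℂ → ℂ)
    {l : List (Fin s)} (hl : l.Nodup) :
    (l.map fun i => (pderivCoord i)^[μ i]).foldr (· ∘ ·) id (fun y => ∏ k, g k (y k)) =
      fun y => ∏ k, (if k ∈ l then deriv^[μ k] (g k) else g k) (y k) := by
  induction l with
  | nil => simp
  | cons i l ih =>
    rw [List.nodup_cons] at hl
    rw [List.map_cons, List.foldr_cons, comp_apply, ih hl.2, pderivCoord_iterate_prod,
      if_neg hl.1]
    funext y
    refine prod_congr rfl fun k _ => ?_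
    rcases eq_or_ne k i with rfl | hk
    · simp
    · simp [hk]

theorem mixedDeriv_prod (μ : Fin s → ℕ) (g : Fin s → ℂ → ℂ) :
    mixedDeriv μ (fun y => ∏ k, g k (y k)) =
      fun y => ∏ k, iteratedDeriv (μ k) (g k) (y k) := by
  rw [mixedDeriv, List.ofFn_eq_map, foldr_pderivCoord_iterate_prod μ g (List.nodup_finRange s)]
  simp [iteratedDeriv_eq_iterate]

theorem mixedDeriv_induction {P : (((Fin s → ℂ) → ℂ) → (Fin s → ℂ) → ℂ) → Prop} (hid : P id)
    (hcomp : ∀ T T', P T → P T' → P (T ∘ T')) (hD : ∀ i, P (pderivCoord i)) (μ : Fin s → ℕ) :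
    P (mixedDeriv μ) := by
  have hiter : ∀ i n, P (pderivCoord i)^[n] := fun i n => by
    induction n with
    | zero => exact hid
    | succ n ih => rw [iterate_succ]; exact hcomp _ _ ih (hD i)
  have hfoldr : ∀ l : List _, (∀ T ∈ l, P T) → P (l.foldr (· ∘ ·) id) := fun l => by
    induction l with
    | nil => exact fun _ => hid
    | cons T l ih =>
      exact fun hl => hcomp T _ (hl T List.mem_cons_self)
        (ih fun T' h => hl T' (List.mem_cons_of_mem _ h))
  exact hfoldr _ (by simpa [List.mem_ofFn] using fun i => hiter i (μ i))

theorem mixedDeriv_const_mul (μ : Fin s → ℕ) (c : ℂ) (f : (Fin s → ℂ) → ℂ) :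
    mixedDeriv μ (fun y => c * f y) = fun y => c * mixedDeriv μ f y :=
  mixedDeriv_induction (P := fun T => ∀ f, T (fun y => c * f y) = fun y => c * T f y)
    (fun _ => rfl) (fun T T' hT hT' f => by simp only [comp_apply, hT', hT])
    (fun i f => pderivCoord_const_mul c f i) μ f

end PartialDerivatives

structure IsAnalyticAdditiveOn {E : Type*} [NormedAddCommGroup E] [NormedSpace ℂ E]
    (V : Set E) (T : (E → ℂ) → E → ℂ) : Prop where
  analyticOnNhd : ∀ f, AnalyticOnNhd ℂ f V → AnalyticOnNhd ℂ (T f) V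
  -- `g` need only agree with the sum on `V`; this is what makes the property stable under `∘`.
  eqOn_sum : ∀ {ι : Type} (S : Finset ι) (F : ι → E → ℂ) (g : E → ℂ),
    (∀ r ∈ S, AnalyticOnNhd ℂ (F r) V) → Set.EqOn g (fun y => ∑ r ∈ S, F r y) V →
      Set.EqOn (T g) (fun y => ∑ r ∈ S, T (F r) y) V

namespace IsAnalyticAdditiveOn

variable {E : Type*} [NormedAddCommGroup E] [NormedSpace ℂ E] {V : Set E}

theorem id : IsAnalyticAdditiveOn V id :=
  ⟨fun _ hf => hf, fun _ _ _ _ hg => hg⟩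

theorem comp {T T' : (E → ℂ) → E → ℂ} (hT : IsAnalyticAdditiveOn V T)
    (hT' : IsAnalyticAdditiveOn V T') : IsAnalyticAdditiveOn V (T ∘ T') where
  analyticOnNhd f hf := hT.analyticOnNhd _ (hT'.analyticOnNhd f hf)
  eqOn_sum S F g hF hg := hT.eqOn_sum S _ _ (fun r hr => hT'.analyticOnNhd _ (hF r hr))
    (hT'.eqOn_sum S F g hF hg)

end IsAnalyticAdditiveOn

theorem isAnalyticAdditiveOn_pderivCoord {s : ℕ} {V : Set (Fin s → ℂ)} (hV : IsOpen V)
    (i : Fin s) : IsAnalyticAdditiveOn V (pderivCoord i) where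
  analyticOnNhd _ hf := hf.pderivCoord hV i
  eqOn_sum S _ _ hF hg y hy := (pderivCoord_congr hV hg i hy).trans
    (pderivCoord_sum S (fun r hr => (hF r hr y hy).differentiableAt) i)

theorem isAnalyticAdditiveOn_mixedDeriv {s : ℕ} {V : Set (Fin s → ℂ)} (hV : IsOpen V)
    (μ : Fin s → ℕ) : IsAnalyticAdditiveOn V (mixedDeriv μ) :=
  mixedDeriv_induction .id (fun _ _ => .comp) (isAnalyticAdditiveOn_pderivCoord hV) μ

theorem analyticOnNhd_const_mul_prod {s : ℕ} {W : Set ℂ} {g : Fin s → ℂ → ℂ}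
    (hg : ∀ k, AnalyticOnNhd ℂ (g k) W) (c : ℂ) :
    AnalyticOnNhd ℂ (fun y => c * ∏ k, g k (y k)) (Set.univ.pi fun _ => W) := fun y hy =>
  analyticAt_const.mul (Finset.analyticAt_fun_prod _ fun k _ =>
    AnalyticAt.comp (f := fun y : Fin s → ℂ => y k) (hg k (y k) (hy k (Set.mem_univ k)))
      ((ContinuousLinearMap.proj k : (Fin s → ℂ) →L[ℂ] ℂ).analyticAt y))

section Bookkeeping

variable {M : Type*} {m n : ℕ}

theorem finsum_rowSums_eq_sum [AddCommMonoid M] (μ : Fin m → ℕ)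
    (g : Matrix (Fin m) (Fin n) ℕ → M) :
    ∑ᶠ (Q : Matrix (Fin m) (Fin n) ℕ) (_ : ∀ i, ∑ j, Q i j = μ i), g Q =
      ∑ Q ∈ Fintype.piFinset fun i => Nat.antidiagonalTuple n (μ i), g Q :=
  finsum_cond_eq_sum_of_cond_iff g fun _ =>
    (Fintype.mem_piFinset.trans (forall_congr' fun _ => Nat.mem_antidiagonalTuple)).symm

theorem finsum_colSums_eq_sum [AddCommMonoid M] (ν : Fin n → ℕ)
    (g : Matrix (Fin m) (Fin n) ℕ → M) :
    ∑ᶠ (R : Matrix (Fin m) (Fin n) ℕ) (_ : ∀ j, ∑ i, R i j = ν j), g R =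
      ∑ R ∈ Fintype.piFinset fun j => Nat.antidiagonalTuple m (ν j), g fun i j => R j i :=
  (finsum_comp_equiv (Matrix.transposeAddEquiv (Fin n) (Fin m) ℕ).toEquiv).symm.trans
    (finsum_rowSums_eq_sum ν fun R => g fun i j => R j i)

theorem sum_prod_sum_eq_finsum_rowSums_colSums [CommSemiring M] (μ : Fin m → ℕ)
    (ν : Fin n → ℕ) (a : ℕ → ℕ → M) :
    ∑ R ∈ Fintype.piFinset fun j => Nat.antidiagonalTuple m (ν j),
        ∏ i, ∑ q ∈ Nat.antidiagonalTuple n (μ i), ∏ j, a (q j) (R j i) =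
      ∑ᶠ (Q : Matrix (Fin m) (Fin n) ℕ) (_ : ∀ i, ∑ j, Q i j = μ i)
        (R : Matrix (Fin m) (Fin n) ℕ) (_ : ∀ j, ∑ i, R i j = ν j),
        ∏ i, ∏ j, a (Q i j) (R i j) := by
  simp_rw [finsum_colSums_eq_sum, finsum_rowSums_eq_sum, prod_univ_sum]
  exact sum_comm

end Bookkeeping

section Expansion

variable {f : ℂ → ℂ} {z : ℂ}

theorem prod_iteratedDeriv_prod_comp_add {K L : ℕ} (ν : Fin L → ℕ) {α : Fin K → ℂ}
    (hα : ∀ i, AnalyticAt ℂ f (z + α i)) :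
    ∏ j, iteratedDeriv (ν j) (fun t => ∏ i, f (z + α i + t)) 0 =
      ∑ R ∈ Fintype.piFinset fun j => Nat.antidiagonalTuple K (ν j),
        (∏ j, ((ν j)! : ℂ)) * ∏ i, ∏ j, iteratedDeriv (R j i) f (z + α i) / (R j i)! := by
  have hLeibniz : ∀ n, iteratedDeriv n (fun t => ∏ i, f (z + α i + t)) 0 =
      n ! * ∑ q ∈ Nat.antidiagonalTuple K n, ∏ i, iteratedDeriv (q i) f (z + α i) / (q i)! :=
    fun n => iteratedDeriv_prod_comp_add_zero (f := fun _ => f) (a := fun i => z + α i)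
      fun i => (hα i).contDiffAt
  simp_rw [hLeibniz, prod_mul_distrib, prod_univ_sum, mul_sum]
  exact sum_congr rfl fun R _ => by rw [prod_comm]

theorem iteratedDeriv_prod_iteratedDeriv_comp_add (hf : AnalyticAt ℂ f z) {L : ℕ} (n : ℕ)
    (r : Fin L → ℕ) :
    iteratedDeriv n (fun t => ∏ j, iteratedDeriv (r j) f (z + t) / (r j)!) 0 =
      n ! * ∑ q ∈ Nat.antidiagonalTuple L n,
        ∏ j, iteratedDeriv (q j + r j) f z / ((q j)! * (r j)!) := by
  refine (iteratedDeriv_prod_comp_add_zero (f := fun j w => iteratedDeriv (r j) f w / (r j)!)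
    (a := fun _ => z) fun j => ?_).trans ?_
  · rw [iteratedDeriv_eq_iterate]
    exact (hf.iterated_deriv (r j)).contDiffAt.div_const _
  · simp_rw [iteratedDeriv_div_const, iteratedDeriv_iteratedDeriv, div_div, mul_comm]

end Expansion

theorem mixedDeriv_mixedDeriv_prod_prod {f : ℂ → ℂ} {z : ℂ} (hf : AnalyticAt ℂ f z) {K L : ℕ}
    (μ : Fin K → ℕ) (ν : Fin L → ℕ) :
    mixedDeriv μ (fun α : Fin K → ℂ =>
        mixedDeriv ν (fun β : Fin L → ℂ => ∏ i, ∏ j, f (z + α i + β j)) 0) 0 =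
      (∏ i, ((μ i)! : ℂ)) * (∏ j, ((ν j)! : ℂ)) *
        ∑ᶠ (Q : Matrix (Fin K) (Fin L) ℕ) (_ : ∀ i, ∑ j, Q i j = μ i)
          (R : Matrix (Fin K) (Fin L) ℕ) (_ : ∀ j, ∑ i, R i j = ν j),
          ∏ i, ∏ j, iteratedDeriv (Q i j + R i j) f z / ((Q i j)! * (R i j)!) := by
  set W := {t : ℂ | AnalyticAt ℂ f (z + t)}
  have hW : IsOpen W := (isOpen_analyticAt ℂ f).preimage (continuous_const.add continuous_id)
  have hV : IsOpen (Set.univ.pi fun _ => W : Set (Fin K → ℂ)) :=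
    isOpen_set_pi Set.finite_univ fun _ _ => hW
  have h0 : (0 : Fin K → ℂ) ∈ Set.univ.pi fun _ => W := fun _ _ => by simpa [W] using hf
  have hG : ∀ (R : Fin L → Fin K → ℕ) i,
      AnalyticOnNhd ℂ (fun t => ∏ j, iteratedDeriv (R j i) f (z + t) / (R j i)!) W :=
    fun R i t ht => Finset.analyticAt_fun_prod _ fun j _ => by
      rw [iteratedDeriv_eq_iterate]
      exact ((ht.iterated_deriv _).comp (analyticAt_const.add analyticAt_id)).div_const
  have hinner : ∀ α : Fin K → ℂ,
      mixedDeriv ν (fun β : Fin L → ℂ => ∏ i, ∏ j, f (z + α i + β j)) 0 =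
        ∏ j, iteratedDeriv (ν j) (fun t => ∏ i, f (z + α i + t)) 0 := fun α => by
    simp_rw [prod_comm (s := univ (α := Fin K))]
    exact congrFun (mixedDeriv_prod ν fun _ t => ∏ i, f (z + α i + t)) 0
  simp_rw [hinner]
  rw [(isAnalyticAdditiveOn_mixedDeriv hV μ).eqOn_sum _ _ _
    (fun R _ => analyticOnNhd_const_mul_prod (hG R) _)
    (fun α hα => prod_iteratedDeriv_prod_comp_add ν fun i => hα i (Set.mem_univ i)) h0]
  refine Eq.trans ?_ (congrArg (_ * ·) (sum_prod_sum_eq_finsum_rowSums_colSums μ ν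
    fun p r => iteratedDeriv (p + r) f z / (p ! * r !)))
  rw [mul_sum]
  refine sum_congr rfl fun R _ => ?_
  rw [mixedDeriv_const_mul,
    mixedDeriv_prod μ fun i t => ∏ j, iteratedDeriv (R j i) f (z + t) / (R j i)!]
  simp_rw [Pi.zero_apply, iteratedDeriv_prod_iteratedDeriv_comp_add hf, prod_mul_distrib]
  ring

theorem stmt_19 (K L : ℕ) (μ : Fin K → ℕ) (ν : Fin L → ℕ) (σ : ℝ) (hσ : 1 < 2 * σ) :
    mixedDeriv μ
        (fun α : Fin K → ℂ =>
          mixedDeriv ν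
            (fun β : Fin L → ℂ =>
              ∏ i : Fin K, ∏ j : Fin L, riemannZeta (2 * σ + α i + β j)) 0) 0 =
      (∏ i, ((μ i).factorial : ℂ)) * (∏ j, ((ν j).factorial : ℂ)) *
        ∑ᶠ (Q : Matrix (Fin K) (Fin L) ℕ) (_ : ∀ i, ∑ j, Q i j = μ i)
          (R : Matrix (Fin K) (Fin L) ℕ) (_ : ∀ j, ∑ i, R i j = ν j),
          ∏ i : Fin K, ∏ j : Fin L,
            iteratedDeriv (Q i j + R i j) riemannZeta (2 * σ) /
              (((Q i j).factorial : ℂ) * ((R i j).factorial : ℂ)) := by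
  have hne : (2 * σ : ℂ) ≠ 1 := fun h => by
    have := congrArg Complex.re h
    norm_num at this
    linarith
  exact mixedDeriv_mixedDeriv_prod_prod (analyticOn_riemannZeta _ hne) μ ν
end
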